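/- If A is an algebra in a congruence-modular variety, then the lattice of compatible superuniformities on A is modular. -/

import Mathlib

open Filter Set

variable {α : Type*}

/-- Composition of filters of relations: the filter generated by compositions
of members. -/
def fComp (F G : Filter (α × α)) : Filter (α × α) :=
  F.lift fun U => G.lift' fun V => SetRel.comp U V

/-- An ideal in the lattice of filters of relations (filters carry the
reverse-inclusion order, which is Mathlib's order on `Filter`): nonempty,
downward closed, and closed under finite joins. -/
def IsFilIdeal (ℰ : Set (Filter (α × α))) : Prop :=
  ℰ.Nonempty ∧ (∀ F ∈ ℰ, ∀ G ≤ F, G ∈ ℰ) ∧ (∀ F ∈ ℰ, ∀ G ∈ ℰ, F ⊔ G ∈ ℰ)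

/-- A superuniformity: an ideal of filters of relations containing the
principal filter on the diagonal, closed under opposites of filters, and
closed under composition of filters. -/
def IsSuperUnif (ℰ : Set (Filter (α × α))) : Prop :=
  IsFilIdeal ℰ ∧ 𝓟 SetRel.id ∈ ℰ ∧ (∀ F ∈ ℰ, Filter.map Prod.swap F ∈ ℰ) ∧
    (∀ F ∈ ℰ, ∀ G ∈ ℰ, fComp F G ∈ ℰ)

/-- Composition of ideals of filters: the ideal generated by the filter
compositions of members (a directed family, hence the downward closure). -/
def filIdealComp (ℰ ℰ' : Set (Filter (α × α))) : Set (Filter (α × α)) :=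
  {H | ∃ F ∈ ℰ, ∃ G ∈ ℰ', H ≤ fComp F G}

/-- Composition of a nonempty list of filters of relations. -/
def filListComp : List (Filter (α × α)) → Filter (α × α)
  | [] => 𝓟 SetRel.id
  | [F] => F
  | F :: G :: l => fComp F (filListComp (G :: l))

/-- The set of finite (nonempty) compositions of filters from `X`. -/
def filComps (X : Set (Filter (α × α))) : Set (Filter (α × α)) :=
  {H | ∃ l : List (Filter (α × α)), l ≠ [] ∧ (∀ F ∈ l, F ∈ X) ∧ H = filListComp l}

/-- The ideal of filters generated by a set `G` of filters: everything below a
finite join of members. -/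
def filIdealGen (G : Set (Filter (α × α))) : Set (Filter (α × α)) :=
  {H | ∃ s : Finset (Filter (α × α)), ↑s ⊆ G ∧ H ≤ s.sup id}

/-- The join of two superuniformities: the ideal generated by all finite
compositions of filters from their union. -/
def suJoin (ℰ ℰ' : Set (Filter (α × α))) : Set (Filter (α × α)) :=
  filIdealGen (filComps (ℰ ∪ ℰ'))

/-- The join of a family of superuniformities. -/
def suSup (S : Set (Set (Filter (α × α)))) : Set (Filter (α × α)) :=
  filIdealGen (filComps (⋃₀ S))

variable {A : Type*} {ι : Type*} {ar : ι → ℕ}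

/-- Terms over a signature (operation symbols `ι` with arities `ar`) in `n` variables. -/
inductive Term (ι : Type*) (ar : ι → ℕ) (n : ℕ) : Type _ where
  | var : Fin n → Term ι ar n
  | app : (i : ι) → (Fin (ar i) → Term ι ar n) → Term ι ar n

/-- Evaluation of a term in an algebra `A` with operations `ops`. -/
def Term.eval {A : Type*} {ι : Type*} {ar : ι → ℕ} {n : ℕ}
    (ops : ∀ i, (Fin (ar i) → A) → A) (v : Fin n → A) : Term ι ar n → A
  | Term.var k => v k
  | Term.app i ts => ops i fun j => Term.eval ops v (ts j)

/-- Componentwise image of a tuple of relations under an `n`-ary operation. -/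
def opImg {A : Type*} {n : ℕ} (w : (Fin n → A) → A) (R : Fin n → Set (A × A)) :
    Set (A × A) :=
  {p | ∃ a b : Fin n → A, (∀ k, (a k, b k) ∈ R k) ∧ p = (w a, w b)}

/-- A set (ideal) of relations on the algebra `A` is compatible if it is closed
under componentwise images of the basic operations. -/
def seCompatible (ops : ∀ i, (Fin (ar i) → A) → A) (ℐ : Set (Set (A × A))) : Prop :=
  ∀ i, ∀ R : Fin (ar i) → Set (A × A), (∀ k, R k ∈ ℐ) → opImg (ops i) R ∈ ℐ

/-- `m 0, …, m d` is a sequence of Day terms for the algebra `(A, ops)`. -/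
def DayTerms (ops : ∀ i, (Fin (ar i) → A) → A) (m : ℕ → Term ι ar 4) (d : ℕ) : Prop :=
  (∀ i ≤ d, ∀ x y : A, (m i).eval ops ![x, y, y, x] = x) ∧
  (∀ x y z w : A, (m 0).eval ops ![x, y, z, w] = x) ∧
  (∀ x y z w : A, (m d).eval ops ![x, y, z, w] = w) ∧
  (∀ i < d, Even i → ∀ x y : A,
    (m i).eval ops ![x, x, y, y] = (m (i + 1)).eval ops ![x, x, y, y]) ∧
  (∀ i < d, Odd i → ∀ x y z : A,
    (m i).eval ops ![x, y, y, z] = (m (i + 1)).eval ops ![x, y, y, z])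

/-- The filter generated by the componentwise images of tuples of members of
filters under an `n`-ary operation. -/
def opFilter {A : Type*} {n : ℕ} (w : (Fin n → A) → A) (F : Fin n → Filter (A × A)) :
    Filter (A × A) :=
  Filter.generate {T | ∃ S : Fin n → Set (A × A), (∀ k, S k ∈ F k) ∧ T = opImg w S}

/-- Compatibility of an ideal of filters with the operations of the algebra. -/
def suCompatible (ops : ∀ i, (Fin (ar i) → A) → A) (ℰ : Set (Filter (A × A))) : Prop :=
  ∀ i, ∀ F : Fin (ar i) → Filter (A × A), (∀ k, F k ∈ ℰ) → opFilter (ops i) F ∈ ℰ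

/-!
Day's argument for congruences, run on filters of relations. Only
`(x ∨ y) ∧ z ≤ x ∨ (y ∧ z)` needs proof, and by distributivity of the filter lattice it suffices
to treat `H ∈ z` below a single composite `F ∘ G ∘ R` with `F ∈ y`, `G ∈ x` and `R` a composite
of members of `x ∪ y`. Pairs `(a, b)` of `H` come with witnesses `a F g G h R b`, and the Day
terms connect `a = m₀(a,g,h,b)` to `b = m_d(a,g,h,b)`: odd steps pass through `m_k(a,g,g,b)` and
use `x`; even steps pass through `m_k(a,a,b,b)`, and the pairs `(m_k(a,g,h,b), m_k(a,a,b,b))`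
lie in `z` (by `m_k(u,v,v,u) = u` and `x ⊆ z`) and below `F' ∘ R'`, where `F' ∈ y` and `R'`, the
image of `R` under a unary polynomial, lies below a composite as long as `R`. Induction on that
length puts them in `x ∨ (y ∧ z)`.

Element chasing is done along the filter `chainFilter F G R H` of witness quadruples: two
functions of the witnesses are `W`-close when the pushforward of that filter under the pair lies
in `W`, an equivalence relation whenever `W` is a superuniformity.
-/

open scoped SetRel

namespace IsSuperUnif

variable {E E' : Set (Filter (α × α))} {F G : Filter (α × α)}

theorem mem_of_le (hE : IsSuperUnif E) (hF : F ∈ E) (h : G ≤ F) : G ∈ E :=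
  hE.1.2.1 F hF G h

theorem sup_mem (hE : IsSuperUnif E) (hF : F ∈ E) (hG : G ∈ E) : F ⊔ G ∈ E :=
  hE.1.2.2 F hF G hG

theorem principal_id_mem (hE : IsSuperUnif E) : 𝓟 SetRel.id ∈ E :=
  hE.2.1

theorem bot_mem (hE : IsSuperUnif E) : ⊥ ∈ E :=
  hE.mem_of_le hE.principal_id_mem bot_le

theorem map_swap_mem (hE : IsSuperUnif E) (hF : F ∈ E) : map Prod.swap F ∈ E :=
  hE.2.2.1 F hF

theorem fComp_mem (hE : IsSuperUnif E) (hF : F ∈ E) (hG : G ∈ E) : fComp F G ∈ E :=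
  hE.2.2.2 F hF G hG

theorem finset_sup_mem {ι : Type*} (hE : IsSuperUnif E) {s : Finset ι} {f : ι → Filter (α × α)}
    (hf : ∀ i ∈ s, f i ∈ E) : s.sup f ∈ E :=
  Finset.sup_induction hE.bot_mem (fun _ hF _ hG => hE.sup_mem hF hG) hf

theorem inter (hE : IsSuperUnif E) (hE' : IsSuperUnif E') : IsSuperUnif (E ∩ E') :=
  ⟨⟨⟨_, hE.principal_id_mem, hE'.principal_id_mem⟩,
      fun _ hF _ h => ⟨hE.mem_of_le hF.1 h, hE'.mem_of_le hF.2 h⟩,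
      fun _ hF _ hG => ⟨hE.sup_mem hF.1 hG.1, hE'.sup_mem hF.2 hG.2⟩⟩,
    ⟨hE.principal_id_mem, hE'.principal_id_mem⟩,
    fun _ hF => ⟨hE.map_swap_mem hF.1, hE'.map_swap_mem hF.2⟩,
    fun _ hF _ hG => ⟨hE.fComp_mem hF.1 hG.1, hE'.fComp_mem hF.2 hG.2⟩⟩

end IsSuperUnif

section fComp

variable {F F' G G' K : Filter (α × α)}

theorem mem_fComp {s : Set (α × α)} : s ∈ fComp F G ↔ ∃ U ∈ F, ∃ V ∈ G, U ○ V ⊆ s := by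
  have hmono (U : Set (α × α)) : Monotone (U ○ · : Set (α × α) → Set (α × α)) :=
    fun _ _ => SetRel.comp_subset_comp_right
  have hlift : Monotone fun U : Set (α × α) => G.lift' (U ○ ·) :=
    fun _ _ h => lift'_mono' fun _ _ => SetRel.comp_subset_comp_left h
  rw [fComp, mem_lift_sets hlift]
  simp only [mem_lift'_sets (hmono _)]

theorem comp_mem_fComp {U V : Set (α × α)} (hU : U ∈ F) (hV : V ∈ G) : U ○ V ∈ fComp F G :=
  mem_fComp.2 ⟨U, hU, V, hV, subset_rfl⟩

theorem tendsto_fComp {X : Type*} {L : Filter X} {f g h : X → α}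
    (hF : Tendsto (fun ξ => (f ξ, g ξ)) L F) (hG : Tendsto (fun ξ => (g ξ, h ξ)) L G) :
    Tendsto (fun ξ => (f ξ, h ξ)) L (fComp F G) := fun s hs => by
  obtain ⟨U, hU, V, hV, hUV⟩ := mem_fComp.1 hs
  show ∀ᶠ ξ in L, (f ξ, h ξ) ∈ s
  filter_upwards [hF.eventually_mem hU, hG.eventually_mem hV] with ξ h₁ h₂ using hUV ⟨g ξ, h₁, h₂⟩

theorem fComp_mono (hF : F ≤ F') (hG : G ≤ G') : fComp F G ≤ fComp F' G' := fun s hs => by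
  obtain ⟨U, hU, V, hV, hUV⟩ := mem_fComp.1 hs
  exact mem_fComp.2 ⟨U, hF hU, V, hG hV, hUV⟩

theorem fComp_assoc (F G K : Filter (α × α)) : fComp (fComp F G) K = fComp F (fComp G K) := by
  ext s
  simp only [mem_fComp]
  constructor
  · rintro ⟨W, ⟨U, hU, V, hV, hUV⟩, V', hV', hs⟩
    refine ⟨U, hU, V ○ V', ⟨V, hV, V', hV', subset_rfl⟩, ?_⟩
    rw [← SetRel.comp_assoc]
    exact (SetRel.comp_subset_comp_left hUV).trans hs
  · rintro ⟨U, hU, W, ⟨V, hV, V', hV', hVV'⟩, hs⟩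
    refine ⟨U ○ V, ⟨U, hU, V, hV, subset_rfl⟩, V', hV', ?_⟩
    rw [SetRel.comp_assoc]
    exact (SetRel.comp_subset_comp_right hVV').trans hs

theorem fComp_principal_id (F : Filter (α × α)) : fComp F (𝓟 SetRel.id) = F := by
  ext s
  simp only [mem_fComp, mem_principal]
  refine ⟨fun ⟨U, hU, V, hV, hs⟩ => mem_of_superset hU ?_,
    fun hs => ⟨s, hs, _, subset_rfl, by simp⟩⟩
  simpa using (SetRel.comp_subset_comp_right hV).trans hs

theorem principal_id_fComp (F : Filter (α × α)) : fComp (𝓟 SetRel.id) F = F := by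
  ext s
  simp only [mem_fComp, mem_principal]
  refine ⟨fun ⟨U, hU, V, hV, hs⟩ => mem_of_superset hV ?_,
    fun hs => ⟨_, subset_rfl, s, hs, by simp⟩⟩
  simpa using (SetRel.comp_subset_comp_left hU).trans hs

theorem map_swap_fComp (F G : Filter (α × α)) :
    map Prod.swap (fComp F G) = fComp (map Prod.swap G) (map Prod.swap F) := by
  ext s
  simp only [mem_map, mem_fComp]
  constructor
  · rintro ⟨U, hU, V, hV, hs⟩
    exact ⟨Prod.swap ⁻¹' V, by simpa [preimage_preimage] using hV,
      Prod.swap ⁻¹' U, by simpa [preimage_preimage] using hU,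
      fun ⟨a, b⟩ ⟨c, h₁, h₂⟩ => hs (show (b, a) ∈ U ○ V from ⟨c, h₂, h₁⟩)⟩
  · rintro ⟨V, hV, U, hU, hs⟩
    exact ⟨Prod.swap ⁻¹' U, hU, Prod.swap ⁻¹' V, hV,
      fun ⟨a, b⟩ ⟨c, h₁, h₂⟩ => hs (show (b, a) ∈ V ○ U from ⟨c, h₂, h₁⟩)⟩

theorem fComp_sup_left : fComp (F ⊔ F') K = fComp F K ⊔ fComp F' K := by
  refine le_antisymm (fun s hs => ?_) (sup_le (fComp_mono le_sup_left le_rfl)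
    (fComp_mono le_sup_right le_rfl))
  obtain ⟨⟨U, hU, V, hV, hs₁⟩, ⟨U', hU', V', hV', hs₂⟩⟩ := And.imp mem_fComp.1 mem_fComp.1 hs
  refine mem_fComp.2 ⟨U ∪ U', union_mem_sup hU hU', V ∩ V', inter_mem hV hV', ?_⟩
  rintro p ⟨c, hc | hc, hcV⟩
  exacts [hs₁ ⟨c, hc, hcV.1⟩, hs₂ ⟨c, hc, hcV.2⟩]

theorem fComp_sup_right : fComp K (G ⊔ G') = fComp K G ⊔ fComp K G' := by
  refine le_antisymm (fun s hs => ?_) (sup_le (fComp_mono le_rfl le_sup_left)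
    (fComp_mono le_rfl le_sup_right))
  obtain ⟨⟨U, hU, V, hV, hs₁⟩, ⟨U', hU', V', hV', hs₂⟩⟩ := And.imp mem_fComp.1 mem_fComp.1 hs
  refine mem_fComp.2 ⟨U ∩ U', inter_mem hU hU', V ∪ V', union_mem_sup hV hV', ?_⟩
  rintro p ⟨c, hcU, hc | hc⟩
  exacts [hs₁ ⟨c, hcU.1, hc⟩, hs₂ ⟨c, hcU.2, hc⟩]

theorem bot_fComp (K : Filter (α × α)) : fComp ⊥ K = ⊥ :=
  le_bot_iff.1 fun _ _ => mem_fComp.2 ⟨∅, mem_bot, univ, univ_mem, by simp⟩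

theorem fComp_bot (K : Filter (α × α)) : fComp K ⊥ = ⊥ :=
  le_bot_iff.1 fun _ _ => mem_fComp.2 ⟨univ, univ_mem, ∅, mem_bot, by simp⟩

end fComp

section Lists

theorem filListComp_cons (F : Filter (α × α)) (l : List (Filter (α × α))) :
    filListComp (F :: l) = fComp F (filListComp l) := by
  cases l with
  | nil => exact (fComp_principal_id F).symm
  | cons G l => rfl

theorem filListComp_append (l l' : List (Filter (α × α))) :
    filListComp (l ++ l') = fComp (filListComp l) (filListComp l') := by
  induction l with
  | nil => exact (principal_id_fComp _).symm
  | cons F l ih => rw [List.cons_append, filListComp_cons, ih, filListComp_cons, fComp_assoc]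

theorem IsSuperUnif.filListComp_mem {E : Set (Filter (α × α))} (hE : IsSuperUnif E)
    {l : List (Filter (α × α))} (hl : ∀ K ∈ l, K ∈ E) : filListComp l ∈ E := by
  induction l with
  | nil => exact hE.principal_id_mem
  | cons F l ih =>
    rw [filListComp_cons]
    exact hE.fComp_mem (hl F List.mem_cons_self) (ih fun K hK => hl K (List.mem_cons_of_mem _ hK))

theorem map_swap_filListComp (l : List (Filter (α × α))) :
    map Prod.swap (filListComp l) = filListComp (l.map (map Prod.swap)).reverse := by
  induction l with
  | nil =>
    simp only [filListComp, map_principal, image_swap_eq_preimage_swap, List.map_nil,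
      List.reverse_nil]
    exact congrArg 𝓟 SetRel.inv_id
  | cons F l ih =>
    rw [filListComp_cons, map_swap_fComp, ih, List.map_cons, List.reverse_cons,
      filListComp_append]
    rfl

end Lists

section Join

variable {X : Set (Filter (α × α))} {𝒢 : Set (Filter (α × α))} {H H' : Filter (α × α)}

theorem mem_filComps_of_mem {K : Filter (α × α)} (hK : K ∈ X) : K ∈ filComps X :=
  ⟨[K], List.cons_ne_nil _ _, by simpa using hK, rfl⟩

theorem fComp_mem_filComps {C D : Filter (α × α)} (hC : C ∈ filComps X) (hD : D ∈ filComps X) :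
    fComp C D ∈ filComps X := by
  obtain ⟨l, hl, hlX, rfl⟩ := hC
  obtain ⟨l', -, hl'X, rfl⟩ := hD
  refine ⟨l ++ l', by simp [hl], fun K hK => ?_, (filListComp_append l l').symm⟩
  exact (List.mem_append.1 hK).elim (hlX K) (hl'X K)

theorem map_swap_mem_filComps (hX : ∀ K ∈ X, map Prod.swap K ∈ X) {C : Filter (α × α)}
    (hC : C ∈ filComps X) : map Prod.swap C ∈ filComps X := by
  obtain ⟨l, hl, hlX, rfl⟩ := hC
  refine ⟨_, by simpa using hl, fun K hK => ?_, map_swap_filListComp l⟩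
  obtain ⟨F, hF, rfl⟩ := List.mem_map.1 (List.mem_reverse.1 hK)
  exact hX F (hlX F hF)

theorem mem_filIdealGen_of_mem {C : Filter (α × α)} (hC : C ∈ 𝒢) : C ∈ filIdealGen 𝒢 :=
  ⟨{C}, by simpa using hC, by simp⟩

theorem mem_filIdealGen_of_le (hH : H ∈ filIdealGen 𝒢) (h : H' ≤ H) : H' ∈ filIdealGen 𝒢 :=
  let ⟨s, hs, hle⟩ := hH
  ⟨s, hs, h.trans hle⟩

theorem sup_mem_filIdealGen (hH : H ∈ filIdealGen 𝒢) (hH' : H' ∈ filIdealGen 𝒢) :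
    H ⊔ H' ∈ filIdealGen 𝒢 := by
  classical
  obtain ⟨s, hs, hle⟩ := hH
  obtain ⟨s', hs', hle'⟩ := hH'
  refine ⟨s ∪ s', by simpa using And.intro hs hs', ?_⟩
  rw [Finset.sup_union]
  exact sup_le_sup hle hle'

theorem fComp_finset_sup (s t : Finset (Filter (α × α))) :
    fComp (s.sup id) (t.sup id) = (s ×ˢ t).sup fun p => fComp p.1 p.2 := by
  rw [Finset.sup_product_left, Finset.apply_sup_eq_sup_comp (fComp · (t.sup id))
    (fun _ _ => fComp_sup_left) (bot_fComp _)]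
  refine Finset.sup_congr rfl fun C _ => ?_
  exact Finset.apply_sup_eq_sup_comp (fComp C) (fun _ _ => fComp_sup_right) (fComp_bot C)

theorem fComp_mem_filIdealGen (h𝒢 : ∀ C ∈ 𝒢, ∀ D ∈ 𝒢, fComp C D ∈ 𝒢)
    (hH : H ∈ filIdealGen 𝒢) (hH' : H' ∈ filIdealGen 𝒢) : fComp H H' ∈ filIdealGen 𝒢 := by
  classical
  obtain ⟨s, hs, hle⟩ := hH
  obtain ⟨t, ht, hle'⟩ := hH'
  refine ⟨(s ×ˢ t).image fun p => fComp p.1 p.2, ?_, ?_⟩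
  · simp only [Finset.coe_image, Finset.coe_product, image_subset_iff]
    exact fun p hp => h𝒢 _ (hs hp.1) _ (ht hp.2)
  · rw [Finset.sup_image, Function.id_comp, ← fComp_finset_sup]
    exact fComp_mono hle hle'

theorem map_swap_mem_filIdealGen (h𝒢 : ∀ C ∈ 𝒢, map Prod.swap C ∈ 𝒢)
    (hH : H ∈ filIdealGen 𝒢) : map Prod.swap H ∈ filIdealGen 𝒢 := by
  classical
  obtain ⟨s, hs, hle⟩ := hH
  refine ⟨s.image (map Prod.swap), ?_, ?_⟩
  · rw [Finset.coe_image]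
    exact image_subset_iff.2 fun C hC => h𝒢 C (hs hC)
  · rw [Finset.sup_image, Function.id_comp]
    exact (map_mono hle).trans (Finset.apply_sup_eq_sup_comp _ (fun _ _ => map_sup) map_bot).le

variable {x y : Set (Filter (α × α))}

theorem subset_suJoin_left : x ⊆ suJoin x y :=
  fun _ hK => mem_filIdealGen_of_mem (mem_filComps_of_mem (Or.inl hK))

theorem subset_suJoin_right : y ⊆ suJoin x y :=
  fun _ hK => mem_filIdealGen_of_mem (mem_filComps_of_mem (Or.inr hK))

theorem suJoin_mono_right {y' : Set (Filter (α × α))} (h : y ⊆ y') : suJoin x y ⊆ suJoin x y' :=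
  fun _ ⟨s, hs, hle⟩ => ⟨s, fun _ hC => (hs hC).imp fun _ hl =>
    ⟨hl.1, fun K hK => (hl.2.1 K hK).imp_right (@h K), hl.2.2⟩, hle⟩

theorem IsSuperUnif.suJoin_subset {E : Set (Filter (α × α))} (hE : IsSuperUnif E) (hx : x ⊆ E)
    (hy : y ⊆ E) : suJoin x y ⊆ E := by
  rintro H ⟨s, hs, hle⟩
  refine hE.mem_of_le (hE.finset_sup_mem fun C hC => ?_) hle
  obtain ⟨l, -, hl, rfl⟩ := hs hC
  exact hE.filListComp_mem fun K hK => (hl K hK).elim (@hx K) (@hy K)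

theorem isSuperUnif_suJoin (hx : IsSuperUnif x) (hy : IsSuperUnif y) : IsSuperUnif (suJoin x y) :=
  ⟨⟨⟨_, subset_suJoin_left hx.principal_id_mem⟩, fun _ hH _ h => mem_filIdealGen_of_le hH h,
      fun _ hH _ hH' => sup_mem_filIdealGen hH hH'⟩,
    subset_suJoin_left hx.principal_id_mem,
    fun _ => map_swap_mem_filIdealGen fun _ => map_swap_mem_filComps fun _ hK =>
      hK.imp hx.map_swap_mem hy.map_swap_mem,
    fun _ hH _ hH' => fComp_mem_filIdealGen (fun _ hC _ hD => fComp_mem_filComps hC hD) hH hH'⟩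

end Join

section Operations

variable {X : Type*} {n : ℕ} {w : (Fin n → A) → A} {F : Fin n → Filter (A × A)}
  {K K' : Filter (A × A)} {L : Filter X}

theorem tendsto_opFilter {u v : X → Fin n → A}
    (h : ∀ i, Tendsto (fun ξ => (u ξ i, v ξ i)) L (F i)) :
    Tendsto (fun ξ => (w (u ξ), w (v ξ))) L (opFilter w F) := by
  refine le_generate_iff.2 ?_
  rintro _ ⟨S, hS, rfl⟩
  refine mem_map.2 ?_
  filter_upwards [eventually_all.2 fun i => (h i).eventually_mem (hS i)] with ξ hξ
  exact ⟨u ξ, v ξ, hξ, rfl⟩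

theorem opFilter_eq_map_pi (w : (Fin n → A) → A) (F : Fin n → Filter (A × A)) :
    opFilter w F = map (fun p => (w fun i => (p i).1, w fun i => (p i).2)) (pi F) := by
  refine le_antisymm (fun s hs => ?_) (tendsto_opFilter fun i => tendsto_eval_pi F i)
  obtain ⟨I, -, S, hS, hsub⟩ := mem_pi.1 (mem_map.1 hs)
  refine mem_of_superset (mem_generate_of_mem ⟨S, hS, rfl⟩) ?_
  rintro _ ⟨a, b, hab, rfl⟩
  exact hsub fun i _ => hab i

theorem mem_opFilter {s : Set (A × A)} :
    s ∈ opFilter w F ↔ ∃ S : Fin n → Set (A × A), (∀ i, S i ∈ F i) ∧ opImg w S ⊆ s := by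
  refine ⟨fun hs => ?_,
    fun ⟨S, hS, hsub⟩ => mem_of_superset (mem_generate_of_mem ⟨S, hS, rfl⟩) hsub⟩
  rw [opFilter_eq_map_pi] at hs
  obtain ⟨I, -, S, hS, hsub⟩ := mem_pi.1 (mem_map.1 hs)
  exact ⟨S, hS, by rintro _ ⟨a, b, hab, rfl⟩; exact hsub fun i _ => hab i⟩

theorem opFilter_term_mem (ops : ∀ i, (Fin (ar i) → A) → A) {E : Set (Filter (A × A))}
    (hE : IsFilIdeal E) (hc : suCompatible ops E) (t : Term ι ar n) (hF : ∀ i, F i ∈ E) :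
    opFilter (fun v => t.eval ops v) F ∈ E := by
  induction t with
  | var k =>
    refine hE.2.1 _ (hF k) _ ?_
    rw [opFilter_eq_map_pi]
    exact tendsto_eval_pi F k
  | app i ts ih =>
    refine hE.2.1 _ (hc i _ ih) _ ?_
    rw [opFilter_eq_map_pi]
    refine tendsto_opFilter fun j => ?_
    rw [opFilter_eq_map_pi]
    exact tendsto_map

/-- The image of `K` under the unary polynomials `a ↦ w (Function.update c j a)`. -/
def opFilterAt (w : (Fin n → A) → A) (j : Fin n) (K : Filter (A × A)) : Filter (A × A) :=
  opFilter w (Function.update (fun _ => 𝓟 SetRel.id) j K)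

theorem opFilterAt_mem (ops : ∀ i, (Fin (ar i) → A) → A) {E : Set (Filter (A × A))}
    (hE : IsSuperUnif E) (hc : suCompatible ops E) (t : Term ι ar n) (j : Fin n) (hK : K ∈ E) :
    opFilterAt (fun v => t.eval ops v) j K ∈ E := by
  refine opFilter_term_mem ops hE.1 hc t fun i => ?_
  rcases eq_or_ne i j with rfl | hi
  · simpa using hK
  · simpa [hi] using hE.principal_id_mem

theorem tendsto_opFilterAt {u v : X → Fin n → A} {j : Fin n}
    (hj : Tendsto (fun ξ => (u ξ j, v ξ j)) L K) (h : ∀ i ≠ j, ∀ ξ, u ξ i = v ξ i) :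
    Tendsto (fun ξ => (w (u ξ), w (v ξ))) L (opFilterAt w j K) := by
  refine tendsto_opFilter fun i => ?_
  rcases eq_or_ne i j with rfl | hi
  · simpa using hj
  · simp [hi, h i hi]

theorem mem_principal_id_of_update {j i : Fin n} {S : Set (A × A)}
    (hS : S ∈ Function.update (fun _ => 𝓟 SetRel.id) j K i) (hi : i ≠ j) : SetRel.id ⊆ S := by
  simpa [hi] using hS

theorem opFilterAt_fComp_le (w : (Fin n → A) → A) (j : Fin n) (K K' : Filter (A × A)) :
    opFilterAt w j (fComp K K') ≤ fComp (opFilterAt w j K) (opFilterAt w j K') := by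
  intro s hs
  obtain ⟨U, hU, V, hV, hUV⟩ := mem_fComp.1 hs
  obtain ⟨S, hS, hSU⟩ := mem_opFilter.1 hU
  obtain ⟨S', hS', hS'V⟩ := mem_opFilter.1 hV
  refine mem_opFilter.2 ⟨Function.update (fun _ => SetRel.id) j (S j ○ S' j), fun i => ?_, ?_⟩
  · rcases eq_or_ne i j with rfl | hi
    · simpa using comp_mem_fComp (hS i) (hS' i)
    · simp [hi]
  rintro _ ⟨a, b, hab, rfl⟩
  obtain ⟨c, hac, hcb⟩ : (a j, b j) ∈ S j ○ S' j := by simpa using hab j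
  refine hUV ⟨w (Function.update a j c), hSU ⟨a, _, fun i => ?_, rfl⟩,
    hS'V ⟨_, b, fun i => ?_, rfl⟩⟩
  all_goals rcases eq_or_ne i j with rfl | hi
  · simpa using hac
  · simpa [hi] using mem_principal_id_of_update (hS i) hi rfl
  · simpa using hcb
  · have hi' : a i = b i := by simpa [hi] using hab i
    simpa [hi, hi'] using mem_principal_id_of_update (hS' i) hi rfl

theorem opFilterAt_principal_id_le (w : (Fin n → A) → A) (j : Fin n) :
    opFilterAt w j (𝓟 SetRel.id) ≤ 𝓟 SetRel.id := by
  rw [opFilterAt, Function.update_eq_self_iff.2 rfl, opFilter_eq_map_pi, pi_principal,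
    map_principal, principal_mono]
  rintro _ ⟨p, hp, rfl⟩
  exact congrArg w (funext fun i => hp i trivial)

theorem opFilterAt_filListComp_le (w : (Fin n → A) → A) (j : Fin n) (l : List (Filter (A × A))) :
    opFilterAt w j (filListComp l) ≤ filListComp (l.map (opFilterAt w j)) := by
  induction l with
  | nil => exact opFilterAt_principal_id_le w j
  | cons K l ih =>
    rw [filListComp_cons, List.map_cons, filListComp_cons]
    exact (opFilterAt_fComp_le w j K _).trans (fComp_mono le_rfl ih)

end Operations

section Closeness

variable {X : Type*} {E E' : Set (Filter (α × α))} {L : Filter X} {f g h : X → α}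

def CloseAlong (E : Set (Filter (α × α))) (L : Filter X) (f g : X → α) : Prop :=
  map (fun ξ => (f ξ, g ξ)) L ∈ E

namespace CloseAlong

theorem of_tendsto (hE : IsSuperUnif E) {K : Filter (α × α)} (hK : K ∈ E)
    (h : Tendsto (fun ξ => (f ξ, g ξ)) L K) : CloseAlong E L f g :=
  hE.mem_of_le hK h

theorem refl (hE : IsSuperUnif E) (f : X → α) : CloseAlong E L f f :=
  of_tendsto hE hE.principal_id_mem (tendsto_principal.2 (Eventually.of_forall fun _ => rfl))

theorem symm (hE : IsSuperUnif E) (hfg : CloseAlong E L f g) : CloseAlong E L g f := by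
  have h := hE.map_swap_mem hfg
  rw [map_map] at h
  exact h

theorem trans (hE : IsSuperUnif E) (hfg : CloseAlong E L f g) (hgh : CloseAlong E L g h) :
    CloseAlong E L f h :=
  of_tendsto hE (hE.fComp_mem hfg hgh) (tendsto_fComp tendsto_map tendsto_map)

theorem mono (hEE' : E ⊆ E') (hfg : CloseAlong E L f g) : CloseAlong E' L f g :=
  hEE' hfg

theorem zero_of_succ (hE : IsSuperUnif E) {f : ℕ → X → α} {d : ℕ}
    (hf : ∀ k < d, CloseAlong E L (f k) (f (k + 1))) : CloseAlong E L (f 0) (f d) := by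
  induction d with
  | zero => exact refl hE _
  | succ d ih =>
    exact (ih fun k hk => hf k (hk.trans d.lt_succ_self)).trans hE (hf d d.lt_succ_self)

end CloseAlong

end Closeness

section ChainFilter

def chainFilter (F G R H : Filter (α × α)) : Filter (Fin 4 → α) :=
  comap (fun ξ => (ξ 0, ξ 1)) F ⊓ comap (fun ξ => (ξ 1, ξ 2)) G ⊓ comap (fun ξ => (ξ 2, ξ 3)) R ⊓
    comap (fun ξ => (ξ 0, ξ 3)) H

variable {F G R H : Filter (α × α)}

theorem tendsto_chainFilter₀₁ : Tendsto (fun ξ : Fin 4 → α => (ξ 0, ξ 1)) (chainFilter F G R H) F :=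
  tendsto_comap.mono_left (inf_le_left.trans (inf_le_left.trans inf_le_left))

theorem tendsto_chainFilter₁₂ : Tendsto (fun ξ : Fin 4 → α => (ξ 1, ξ 2)) (chainFilter F G R H) G :=
  tendsto_comap.mono_left (inf_le_left.trans (inf_le_left.trans inf_le_right))

theorem tendsto_chainFilter₂₃ : Tendsto (fun ξ : Fin 4 → α => (ξ 2, ξ 3)) (chainFilter F G R H) R :=
  tendsto_comap.mono_left (inf_le_left.trans inf_le_right)

theorem tendsto_chainFilter₀₃ : Tendsto (fun ξ : Fin 4 → α => (ξ 0, ξ 3)) (chainFilter F G R H) H :=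
  tendsto_comap.mono_left inf_le_right

theorem le_map_chainFilter (hle : H ≤ fComp F (fComp G R)) :
    H ≤ map (fun ξ => (ξ 0, ξ 3)) (chainFilter F G R H) := by
  intro s hs
  obtain ⟨t₃, ht₃, t₄, ⟨T, hT, hT₄⟩, hs₄⟩ := mem_inf_iff_superset.1 (mem_map.1 hs)
  obtain ⟨t₂, ht₂, t₃', ⟨V, hV, hV₃⟩, hs₃⟩ := mem_inf_iff_superset.1 ht₃
  obtain ⟨t₁, ⟨V₀, hV₀, hV₁⟩, t₂', ⟨U, hU, hU₂⟩, hs₂⟩ := mem_inf_iff_superset.1 ht₂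
  refine mem_of_superset (inter_mem hT (hle (comp_mem_fComp hV₀ (comp_mem_fComp hU hV)))) ?_
  rintro ⟨a, b⟩ ⟨hab, g, hag, h, hgh, hhb⟩
  have hξ : ![a, g, h, b] ∈ t₃ ∩ t₄ := ⟨hs₃ ⟨hs₂ ⟨hV₁ hag, hU₂ hgh⟩, hV₃ hhb⟩, hT₄ hab⟩
  exact hs₄ hξ

end ChainFilter

section Day

variable {ops : ∀ i, (Fin (ar i) → A) → A} {F G R H : Filter (A × A)}
  {x y z W : Set (Filter (A × A))}

theorem closeAlong_eval_of_xyyx (hz : IsSuperUnif z) (hzc : suCompatible ops z) (hG : G ∈ z)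
    (hH : H ∈ z) {t : Term ι ar 4} (ht : ∀ u v, t.eval ops ![u, v, v, u] = u) :
    CloseAlong z (chainFilter F G R H) (fun ξ => t.eval ops ![ξ 0, ξ 1, ξ 2, ξ 3])
      (fun ξ => t.eval ops ![ξ 0, ξ 0, ξ 3, ξ 3]) := by
  have step (j : Fin 4) {K : Filter (A × A)} (hK : K ∈ z) {u v : (Fin 4 → A) → Fin 4 → A}
      (hj : Tendsto (fun ξ => (u ξ j, v ξ j)) (chainFilter F G R H) K)
      (h : ∀ i ≠ j, ∀ ξ, u ξ i = v ξ i) :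
      CloseAlong z (chainFilter F G R H) (fun ξ => t.eval ops (u ξ)) (fun ξ => t.eval ops (v ξ)) :=
    .of_tendsto hz (opFilterAt_mem ops hz hzc t j hK) (tendsto_opFilterAt hj h)
  have h₁ := step 2 (hz.map_swap_mem hG) (u := fun ξ => ![ξ 0, ξ 1, ξ 2, ξ 3])
    (v := fun ξ => ![ξ 0, ξ 1, ξ 1, ξ 3]) (tendsto_map.comp tendsto_chainFilter₁₂)
    (by intro i hi ξ; fin_cases i <;> simp_all)
  have h₂ := step 3 (hz.map_swap_mem hH) (u := fun ξ => ![ξ 0, ξ 1, ξ 1, ξ 3])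
    (v := fun ξ => ![ξ 0, ξ 1, ξ 1, ξ 0]) (tendsto_map.comp tendsto_chainFilter₀₃)
    (by intro i hi ξ; fin_cases i <;> simp_all)
  have h₃ := step 3 hH (u := fun ξ => ![ξ 0, ξ 0, ξ 0, ξ 0])
    (v := fun ξ => ![ξ 0, ξ 0, ξ 0, ξ 3]) tendsto_chainFilter₀₃
    (by intro i hi ξ; fin_cases i <;> simp_all)
  have h₄ := step 2 hH (u := fun ξ => ![ξ 0, ξ 0, ξ 0, ξ 3])
    (v := fun ξ => ![ξ 0, ξ 0, ξ 3, ξ 3]) tendsto_chainFilter₀₃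
    (by intro i hi ξ; fin_cases i <;> simp_all)
  -- `t(a,g,h,b) ~ t(a,g,g,b) ~ t(a,g,g,a) = a = t(a,a,a,a) ~ t(a,a,a,b) ~ t(a,a,b,b)`
  simp only [ht] at h₂ h₃
  exact h₁.trans hz (h₂.trans hz (h₃.trans hz h₄))

theorem tendsto_eval_opFilterAt_fComp {t : Term ι ar 4} :
    Tendsto (fun ξ => (t.eval ops ![ξ 0, ξ 1, ξ 2, ξ 3], t.eval ops ![ξ 0, ξ 0, ξ 3, ξ 3]))
      (chainFilter F G R H) (fComp (opFilterAt (fun v => t.eval ops v) 1 (map Prod.swap F))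
        (opFilterAt (fun v => t.eval ops v) 2 R)) :=
  tendsto_fComp (g := fun ξ => t.eval ops ![ξ 0, ξ 0, ξ 2, ξ 3])
    (tendsto_opFilterAt (tendsto_map.comp tendsto_chainFilter₀₁)
      (by intro i hi ξ; fin_cases i <;> simp_all))
    (tendsto_opFilterAt tendsto_chainFilter₂₃ (by intro i hi ξ; fin_cases i <;> simp_all))

theorem closeAlong_day_succ {m : ℕ → Term ι ar 4} {d : ℕ} (hday : DayTerms ops m d)
    (hx : IsSuperUnif x) (hxc : suCompatible ops x) (hW : IsSuperUnif W) (hxW : x ⊆ W)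
    (hG : G ∈ x)
    (haabb : ∀ j ≤ d, CloseAlong W (chainFilter F G R H)
      (fun ξ => (m j).eval ops ![ξ 0, ξ 1, ξ 2, ξ 3])
      (fun ξ => (m j).eval ops ![ξ 0, ξ 0, ξ 3, ξ 3]))
    {k : ℕ} (hk : k < d) :
    CloseAlong W (chainFilter F G R H) (fun ξ => (m k).eval ops ![ξ 0, ξ 1, ξ 2, ξ 3])
      (fun ξ => (m (k + 1)).eval ops ![ξ 0, ξ 1, ξ 2, ξ 3]) := by
  obtain ⟨-, -, -, heven, hodd⟩ := hday
  rcases Nat.even_or_odd k with hk' | hk'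
  · have h := (haabb (k + 1) hk).symm hW
    simp only [← heven k hk hk'] at h
    exact (haabb k hk.le).trans hW h
  · have h₁ : CloseAlong x (chainFilter F G R H) (fun ξ => (m k).eval ops ![ξ 0, ξ 1, ξ 2, ξ 3])
        (fun ξ => (m k).eval ops ![ξ 0, ξ 1, ξ 1, ξ 3]) :=
      .of_tendsto hx (opFilterAt_mem ops hx hxc (m k) 2 (hx.map_swap_mem hG))
        (tendsto_opFilterAt (tendsto_map.comp tendsto_chainFilter₁₂)
          (by intro i hi ξ; fin_cases i <;> simp_all))
    have h₂ : CloseAlong x (chainFilter F G R H)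
        (fun ξ => (m (k + 1)).eval ops ![ξ 0, ξ 1, ξ 1, ξ 3])
        (fun ξ => (m (k + 1)).eval ops ![ξ 0, ξ 1, ξ 2, ξ 3]) :=
      .of_tendsto hx (opFilterAt_mem ops hx hxc (m (k + 1)) 2 hG)
        (tendsto_opFilterAt tendsto_chainFilter₁₂ (by intro i hi ξ; fin_cases i <;> simp_all))
    simp only [hodd k hk hk'] at h₁
    exact (h₁.trans hx h₂).mono hxW

theorem mem_of_le_fComp_fComp {m : ℕ → Term ι ar 4} {d : ℕ} (hday : DayTerms ops m d)
    (hx : IsSuperUnif x) (hxc : suCompatible ops x) (hy : IsSuperUnif y)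
    (hyc : suCompatible ops y) (hz : IsSuperUnif z) (hzc : suCompatible ops z) (hxz : x ⊆ z)
    (hW : IsSuperUnif W) (hxW : x ⊆ W) (hF : F ∈ y) (hG : G ∈ x) (hH : H ∈ z)
    (hle : H ≤ fComp F (fComp G R))
    (hR : ∀ k, ∀ F' ∈ y, ∀ K ∈ z,
      K ≤ fComp F' (opFilterAt (fun v => (m k).eval ops v) 2 R) → K ∈ W) :
    H ∈ W := by
  have haabb (j : ℕ) (hj : j ≤ d) : CloseAlong W (chainFilter F G R H)
      (fun ξ => (m j).eval ops ![ξ 0, ξ 1, ξ 2, ξ 3])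
      (fun ξ => (m j).eval ops ![ξ 0, ξ 0, ξ 3, ξ 3]) :=
    hR j _ (opFilterAt_mem ops hy hyc (m j) 1 (hy.map_swap_mem hF)) _
      (closeAlong_eval_of_xyyx hz hzc (hxz hG) hH (hday.1 j hj)) tendsto_eval_opFilterAt_fComp
  have hchain := CloseAlong.zero_of_succ (d := d)
    (f := fun k (ξ : Fin 4 → A) => (m k).eval ops ![ξ 0, ξ 1, ξ 2, ξ 3]) hW fun k hk =>
    closeAlong_day_succ hday hx hxc hW hxW hG haabb hk
  simp only [hday.2.1, hday.2.2.1] at hchain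
  exact hW.mem_of_le hchain (le_map_chainFilter hle)

end Day

section Modularity

variable {x y z : Set (Filter (A × A))}

theorem mem_suJoin_inter_of_le_fComp (ops : ∀ i, (Fin (ar i) → A) → A) {m : ℕ → Term ι ar 4}
    {d : ℕ} (hday : DayTerms ops m d) (hx : IsSuperUnif x) (hxc : suCompatible ops x)
    (hy : IsSuperUnif y) (hyc : suCompatible ops y) (hz : IsSuperUnif z)
    (hzc : suCompatible ops z) (hxz : x ⊆ z) (T : List (Filter (A × A)))
    (hT : ∀ K ∈ T, K ∈ x ∪ y) {F H : Filter (A × A)} (hF : F ∈ y) (hH : H ∈ z)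
    (hle : H ≤ fComp F (filListComp T)) : H ∈ suJoin x (y ∩ z) := by
  induction hn : T.length using Nat.strong_induction_on generalizing T F H with
  | _ n ih =>
    rcases T with _ | ⟨K, T⟩
    · rw [filListComp, fComp_principal_id] at hle
      exact subset_suJoin_right ⟨hy.mem_of_le hF hle, hH⟩
    have hT' : ∀ K' ∈ T, K' ∈ x ∪ y := fun K' hK' => hT K' (List.mem_cons_of_mem _ hK')
    have hlen : T.length < n := by simp [← hn]
    rw [filListComp_cons] at hle
    rcases hT K List.mem_cons_self with hK | hK
    · refine mem_of_le_fComp_fComp hday hx hxc hy hyc hz hzc hxz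
        (isSuperUnif_suJoin hx (hy.inter hz)) subset_suJoin_left hF hK hH hle
        fun k F' hF' K' hK' hle' => ih _ (by simpa using hlen) _ ?_ hF' hK'
          (hle'.trans (fComp_mono le_rfl (opFilterAt_filListComp_le _ _ _))) rfl
      intro K'' hK''
      obtain ⟨K₀, hK₀, rfl⟩ := List.mem_map.1 hK''
      exact (hT' K₀ hK₀).imp (opFilterAt_mem ops hx hxc (m k) 2)
        (opFilterAt_mem ops hy hyc (m k) 2)
    · exact ih _ hlen T hT' (hy.fComp_mem hF hK) hH (by rwa [fComp_assoc]) rfl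

theorem suJoin_inter_subset {W : Set (Filter (A × A))} (hz : IsSuperUnif z) (hW : IsSuperUnif W)
    (h : ∀ l : List (Filter (A × A)), (∀ K ∈ l, K ∈ x ∪ y) → ∀ H ∈ z, H ≤ filListComp l → H ∈ W) :
    suJoin x y ∩ z ⊆ W := by
  rintro H ⟨⟨s, hs, hle⟩, hHz⟩
  rw [← inf_eq_left.2 hle, Finset.sup_inf_distrib_left]
  refine hW.finset_sup_mem fun C hC => ?_
  obtain ⟨l, -, hl, rfl⟩ := hs hC
  exact h l hl _ (hz.mem_of_le hHz inf_le_left) inf_le_right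

end Modularity

theorem stmt19 (ops : ∀ i, (Fin (ar i) → A) → A) (m : ℕ → Term ι ar 4) (d : ℕ)
    (hday : DayTerms ops m d)
    (x y z : Set (Filter (A × A)))
    (hx : IsSuperUnif x) (hxc : suCompatible ops x)
    (hy : IsSuperUnif y) (hyc : suCompatible ops y)
    (hz : IsSuperUnif z) (hzc : suCompatible ops z)
    (hxz : x ⊆ z) :
    suJoin x (y ∩ z) = suJoin x y ∩ z := by
  refine Subset.antisymm (subset_inter (suJoin_mono_right inter_subset_left)
    (hz.suJoin_subset hxz inter_subset_right)) ?_
  refine suJoin_inter_subset hz (isSuperUnif_suJoin hx (hy.inter hz)) fun l hl H hH hle => ?_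
  exact mem_suJoin_inter_of_le_fComp ops hday hx hxc hy hyc hz hzc hxz l hl hy.principal_id_mem hH
    (by rwa [principal_id_fComp])
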